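/- arXiv:2201.01597 — 2 statements merged into one kernel-verified Lean document; each statement's English description precedes it below -/
import Mathlib

section
/- Let Ω ⊂ ℝ³ be a measurable set and let f : Ω × ℝ³ → ℝ be a nonnegative measurable function. Suppose there exist constants M > 0 and κ₀ > 1 such that f(x,v) ≤ M for almost every (x,v) ∈ Ω × ℝ³, and ∫_Ω ∫_{ℝ³} |v|^κ f(x,v) dv dx ≤ M for every κ ∈ [0,κ₀]. Then for every p ∈ [1, (κ₀+3)/4] there exists a constant C, depending only on M, κ₀ and p (in particular not on f), such that the vector-valued function j(x) := ∫_{ℝ³} v f(x,v) dv satisfies ‖j‖_{L^p(Ω)} ≤ C. -/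
/-!
For fixed `x`, split `∫ |v| f(x,v) dv` at a radius `R`: on the ball `|v| ≤ R` the bound `f ≤ M`
contributes at most `M |B₁| R⁴`, and outside it `|v| ≤ R^{1-κ} |v|^κ` (as `κ ≥ 1`), so the tail is
at most `R^{1-κ} m_κ(x)`, where `m_κ(x) = ∫ |v|^κ f(x,v) dv`. Balancing the two terms by
`R = m_κ(x)^{1/(κ+3)}` gives `|j(x)| ≤ (M |B₁| + 1) m_κ(x)^{4/(κ+3)}`. With `κ = 4p - 3 ∈ [1, κ₀]`
this reads `|j(x)|^p ≤ (M |B₁| + 1)^p m_κ(x)`, and integrating over `Ω` bounds `‖j‖_p^p` by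
`(M |B₁| + 1)^p M`. In dimension `d` the same computation works with `R^{d+1}` and
`p = (κ+d)/(d+1)`.
-/

open MeasureTheory Set

noncomputable section

abbrev E3 : Type := EuclideanSpace ℝ (Fin 3)

open Metric Module ENNReal

lemma le_rpow_one_sub_mul_rpow {R t κ : ℝ} (hR : 0 < R) (hRt : R ≤ t) (hκ : 1 ≤ κ) :
    t ≤ R ^ (1 - κ) * t ^ κ :=
  calc t = t ^ (1 - κ) * t ^ κ := by
        rw [← Real.rpow_add (hR.trans_le hRt), sub_add_cancel, Real.rpow_one]
    _ ≤ R ^ (1 - κ) * t ^ κ :=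
        mul_le_mul_of_nonneg_right (Real.rpow_le_rpow_of_nonpos hR hRt (by linarith))
          (Real.rpow_nonneg (hR.le.trans hRt) κ)

section Balance

variable {r κ p : ℝ} {d : ℕ}

lemma rpow_one_div_mul_pow_succ (hr : 0 < r) (hp : 0 < p) :
    (r ^ (1 / ((d + 1) * p))) ^ (d + 1) = r ^ (1 / p) := by
  rw [← Real.rpow_natCast, ← Real.rpow_mul hr.le]
  congr 1
  push_cast
  field_simp

lemma rpow_one_div_mul_rpow_one_sub_mul (hr : 0 < r) (hp : 0 < p)
    (hκp : κ + d = (d + 1) * p) :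
    (r ^ (1 / ((d + 1) * p))) ^ (1 - κ) * r = r ^ (1 / p) := by
  rw [← Real.rpow_mul hr.le]
  nth_rewrite 2 [← Real.rpow_one r]
  rw [← Real.rpow_add hr]
  congr 1
  field_simp
  linarith

end Balance

lemma ofReal_norm_integral_smul_le {α E : Type*} [MeasurableSpace α] [NormedAddCommGroup E]
    [NormedSpace ℝ E] (μ : Measure α) (g : α → ℝ) (hg0 : ∀ a, 0 ≤ g a) (v : α → E) :
    ENNReal.ofReal ‖∫ a, g a • v a ∂μ‖ ≤ ∫⁻ a, ENNReal.ofReal (‖v a‖ * g a) ∂μ := by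
  rw [ofReal_norm]
  refine (enorm_integral_le_lintegral_enorm _).trans (le_of_eq (lintegral_congr fun a => ?_))
  rw [← ofReal_norm, norm_smul, Real.norm_of_nonneg (hg0 a), mul_comm]

lemma lintegral_norm_mul_eq_zero_of_moment_eq_zero {E : Type*} [NormedAddCommGroup E]
    [MeasurableSpace E] [OpensMeasurableSpace E] (μ : Measure E) {g : E → ℝ} {κ : ℝ}
    (hg : Measurable g) (hm : ∫⁻ v, ENNReal.ofReal (‖v‖ ^ κ * g v) ∂μ = 0) :
    ∫⁻ v, ENNReal.ofReal (‖v‖ * g v) ∂μ = 0 := by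
  rw [lintegral_eq_zero_iff (by fun_prop)] at hm ⊢
  filter_upwards [hm] with v hv
  simp only [Pi.zero_apply, ENNReal.ofReal_eq_zero] at hv ⊢
  rcases (norm_nonneg v).eq_or_lt with hv0 | hv0
  · simp [← hv0]
  · have hgv : g v ≤ 0 := nonpos_of_mul_nonpos_right hv (Real.rpow_pos_of_pos hv0 κ)
    exact mul_nonpos_of_nonneg_of_nonpos hv0.le hgv

section FirstMoment

variable {E : Type*} [NormedAddCommGroup E] [NormedSpace ℝ E] [FiniteDimensional ℝ E]
  [MeasurableSpace E] [BorelSpace E] (μ : Measure E) [μ.IsAddHaarMeasure]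
  {g : E → ℝ} {M κ : ℝ}

lemma lintegral_norm_mul_le_ball_add_tail (hg0 : ∀ v, 0 ≤ g v) (hgM : ∀ᵐ v ∂μ, g v ≤ M)
    (hκ : 1 ≤ κ) {R : ℝ} (hR : 0 < R) :
    ∫⁻ v, ENNReal.ofReal (‖v‖ * g v) ∂μ
      ≤ ENNReal.ofReal (M * (μ (ball 0 1)).toReal * R ^ (finrank ℝ E + 1))
        + ENNReal.ofReal (R ^ (1 - κ)) * ∫⁻ v, ENNReal.ofReal (‖v‖ ^ κ * g v) ∂μ := by
  have hball : MeasurableSet (closedBall (0 : E) R) := measurableSet_closedBall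
  rw [← lintegral_add_compl _ hball]
  gcongr
  · calc ∫⁻ v in closedBall 0 R, ENNReal.ofReal (‖v‖ * g v) ∂μ
        ≤ ∫⁻ _ in closedBall 0 R, ENNReal.ofReal (R * M) ∂μ := by
          refine setLIntegral_mono_ae' hball ?_
          filter_upwards [hgM] with v hvM hvR
          exact ENNReal.ofReal_le_ofReal
            (mul_le_mul (mem_closedBall_zero_iff.1 hvR) hvM (hg0 v) hR.le)
      _ = ENNReal.ofReal (M * (μ (ball 0 1)).toReal * R ^ (finrank ℝ E + 1)) := by
          set B := (μ (ball 0 1)).toReal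
          have hB : μ (ball 0 1) = ENNReal.ofReal B :=
            (ofReal_toReal measure_ball_lt_top.ne).symm
          rw [setLIntegral_const, Measure.addHaar_closedBall _ _ hR.le, hB,
            ← ENNReal.ofReal_mul (by positivity), ← ENNReal.ofReal_mul' (by positivity)]
          ring_nf
  · calc ∫⁻ v in (closedBall 0 R)ᶜ, ENNReal.ofReal (‖v‖ * g v) ∂μ
        ≤ ∫⁻ v in (closedBall 0 R)ᶜ,
            ENNReal.ofReal (R ^ (1 - κ)) * ENNReal.ofReal (‖v‖ ^ κ * g v) ∂μ := by
          refine setLIntegral_mono' hball.compl fun v hv => ?_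
          rw [← ENNReal.ofReal_mul (by positivity), ← mul_assoc]
          have hRv : R < ‖v‖ := by simpa using hv
          exact ENNReal.ofReal_le_ofReal
            (mul_le_mul_of_nonneg_right (le_rpow_one_sub_mul_rpow hR hRv.le hκ) (hg0 v))
      _ ≤ ENNReal.ofReal (R ^ (1 - κ)) * ∫⁻ v, ENNReal.ofReal (‖v‖ ^ κ * g v) ∂μ := by
          rw [lintegral_const_mul' _ _ ofReal_ne_top]
          gcongr
          exact Measure.restrict_le_self

lemma lintegral_norm_mul_le_moment_rpow (hg : Measurable g) (hg0 : ∀ v, 0 ≤ g v)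
    (hgM : ∀ᵐ v ∂μ, g v ≤ M) (hM : 0 ≤ M) (hκ : 1 ≤ κ) {p : ℝ} (hp : 0 < p)
    (hκp : κ + finrank ℝ E = (finrank ℝ E + 1) * p) :
    ∫⁻ v, ENNReal.ofReal (‖v‖ * g v) ∂μ
      ≤ ENNReal.ofReal (M * (μ (ball 0 1)).toReal + 1)
        * (∫⁻ v, ENNReal.ofReal (‖v‖ ^ κ * g v) ∂μ) ^ (1 / p) := by
  set m := ∫⁻ v, ENNReal.ofReal (‖v‖ ^ κ * g v) ∂μ
  set B := (μ (ball 0 1)).toReal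
  have hC : 0 < M * B + 1 := by positivity
  rcases eq_or_ne m ⊤ with hm | hm
  · rw [hm, top_rpow_of_pos (one_div_pos.2 hp), mul_top (ofReal_pos.2 hC).ne']
    exact le_top
  rcases eq_or_ne m 0 with hm0 | hm0
  · rw [lintegral_norm_mul_eq_zero_of_moment_eq_zero μ hg hm0]
    exact zero_le
  have hr : 0 < m.toReal := toReal_pos hm0 hm
  set R := m.toReal ^ (1 / ((finrank ℝ E + 1) * p))
  have hR : 0 < R := by positivity
  calc ∫⁻ v, ENNReal.ofReal (‖v‖ * g v) ∂μ
      ≤ ENNReal.ofReal (M * B * R ^ (finrank ℝ E + 1)) + ENNReal.ofReal (R ^ (1 - κ)) * m :=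
        lintegral_norm_mul_le_ball_add_tail μ hg0 hgM hκ hR
    _ = ENNReal.ofReal (M * B * R ^ (finrank ℝ E + 1))
          + ENNReal.ofReal (R ^ (1 - κ) * m.toReal) := by
        rw [ENNReal.ofReal_mul (Real.rpow_nonneg hR.le _), ofReal_toReal hm]
    _ = ENNReal.ofReal ((M * B + 1) * m.toReal ^ (1 / p)) := by
        rw [rpow_one_div_mul_pow_succ hr hp, rpow_one_div_mul_rpow_one_sub_mul hr hp hκp,
          ← ENNReal.ofReal_add (by positivity) (by positivity)]
        ring_nf
    _ = ENNReal.ofReal (M * B + 1) * m ^ (1 / p) := by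
        rw [ENNReal.ofReal_mul hC.le, ← ofReal_rpow_of_pos hr, ofReal_toReal hm]

lemma ofReal_norm_integral_smul_rpow_le (hg : Measurable g) (hg0 : ∀ v, 0 ≤ g v)
    (hgM : ∀ᵐ v ∂μ, g v ≤ M) (hM : 0 ≤ M) (hκ : 1 ≤ κ) {p : ℝ} (hp : 0 < p)
    (hκp : κ + finrank ℝ E = (finrank ℝ E + 1) * p) :
    ENNReal.ofReal ‖∫ v, g v • v ∂μ‖ ^ p
      ≤ ENNReal.ofReal (M * (μ (ball 0 1)).toReal + 1) ^ p
        * ∫⁻ v, ENNReal.ofReal (‖v‖ ^ κ * g v) ∂μ :=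
  calc ENNReal.ofReal ‖∫ v, g v • v ∂μ‖ ^ p
      ≤ (ENNReal.ofReal (M * (μ (ball 0 1)).toReal + 1)
          * (∫⁻ v, ENNReal.ofReal (‖v‖ ^ κ * g v) ∂μ) ^ (1 / p)) ^ p :=
        rpow_le_rpow ((ofReal_norm_integral_smul_le μ g hg0 id).trans
          (lintegral_norm_mul_le_moment_rpow μ hg hg0 hgM hM hκ hp hκp)) hp.le
    _ = _ := by
        rw [mul_rpow_of_nonneg _ _ hp.le, ← rpow_mul, one_div_mul_cancel hp.ne', rpow_one]

lemma lintegral_ofReal_norm_integral_smul_rpow_le {X : Type*} [MeasurableSpace X]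
    (ν : Measure X) {f : X × E → ℝ} (hf : Measurable f) (hf0 : ∀ x v, 0 ≤ f (x, v))
    (hfM : ∀ᵐ z ∂ν.prod μ, f z ≤ M) (hM : 0 ≤ M) (hκ : 1 ≤ κ) {p : ℝ} (hp : 0 < p)
    (hκp : κ + finrank ℝ E = (finrank ℝ E + 1) * p) :
    ∫⁻ x, ENNReal.ofReal ‖∫ v, f (x, v) • v ∂μ‖ ^ p ∂ν
      ≤ ENNReal.ofReal (M * (μ (ball 0 1)).toReal + 1) ^ p
        * ∫⁻ x, ∫⁻ v, ENNReal.ofReal (‖v‖ ^ κ * f (x, v)) ∂μ ∂ν := by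
  rw [← lintegral_const_mul' _ _ (rpow_ne_top_of_nonneg hp.le ofReal_ne_top)]
  refine lintegral_mono_ae ?_
  filter_upwards [Measure.ae_ae_of_ae_prod hfM] with x hx
  exact ofReal_norm_integral_smul_rpow_le μ (hf.comp measurable_prodMk_left) (hf0 x) hx hM hκ hp
    hκp

end FirstMoment

theorem stmt1_general (M κ₀ : ℝ) (hM : 0 < M)
    (p : ℝ) (hp1 : 1 ≤ p) (hp2 : p ≤ (κ₀ + 3) / 4) :
    ∃ C : ℝ, 0 < C ∧
      ∀ (Ω : Set E3) (f : E3 × E3 → ℝ),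
        MeasurableSet Ω →
        Measurable f →
        (∀ x v : E3, 0 ≤ f (x, v)) →
        (∀ᵐ z ∂((volume.restrict Ω).prod (volume : Measure E3)), f z ≤ M) →
        (∀ κ : ℝ, 0 ≤ κ → κ ≤ κ₀ →
          (∫⁻ x in Ω, ∫⁻ v : E3, ENNReal.ofReal (‖v‖ ^ κ * f (x, v)))
            ≤ ENNReal.ofReal M) →
        (∫⁻ x in Ω, (ENNReal.ofReal ‖∫ v : E3, f (x, v) • v‖) ^ p) ^ (1 / p)
          ≤ ENNReal.ofReal C := by
  have hp : 0 < p := by linarith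
  set B := (volume (ball (0 : E3) 1)).toReal
  refine ⟨(M * B + 1) * M ^ (1 / p), by positivity, fun Ω f _ hf hf0 hfM hmom => ?_⟩
  have hκp : (4 * p - 3) + finrank ℝ E3 = (finrank ℝ E3 + 1) * p := by
    rw [finrank_euclideanSpace_fin]
    push_cast
    ring
  have hpow : ∫⁻ x in Ω, ENNReal.ofReal ‖∫ v, f (x, v) • v‖ ^ p
      ≤ ENNReal.ofReal (M * B + 1) ^ p * ENNReal.ofReal M :=
    (lintegral_ofReal_norm_integral_smul_rpow_le volume _ hf hf0 hfM hM.le (by linarith) hp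
      hκp).trans (by gcongr; exact hmom _ (by linarith) (by linarith))
  calc (∫⁻ x in Ω, ENNReal.ofReal ‖∫ v, f (x, v) • v‖ ^ p) ^ (1 / p)
      ≤ (ENNReal.ofReal (M * B + 1) ^ p * ENNReal.ofReal M) ^ (1 / p) :=
        rpow_le_rpow hpow (by positivity)
    _ = ENNReal.ofReal ((M * B + 1) * M ^ (1 / p)) := by
        rw [mul_rpow_of_nonneg _ _ (by positivity), ← rpow_mul, mul_one_div_cancel hp.ne',
          rpow_one, ofReal_rpow_of_pos hM, ← ENNReal.ofReal_mul (by positivity)]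

/-- `L^p` bound on the first velocity moment
`j(x) = ∫_{ℝ³} v f(x,v) dv` for bounded `f` with bounded velocity moments
up to order `κ₀ > 1`, for `p ∈ [1, (κ₀+3)/4]`, with constant depending only
on `M`, `κ₀` and `p`. -/
theorem stmt1 (M κ₀ : ℝ) (hM : 0 < M) (hκ₀ : 1 < κ₀)
    (p : ℝ) (hp1 : 1 ≤ p) (hp2 : p ≤ (κ₀ + 3) / 4) :
    ∃ C : ℝ, 0 < C ∧
      ∀ (Ω : Set E3) (f : E3 × E3 → ℝ),
        MeasurableSet Ω →
        Measurable f →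
        (∀ x v : E3, 0 ≤ f (x, v)) →
        (∀ᵐ z ∂((volume.restrict Ω).prod (volume : Measure E3)), f z ≤ M) →
        (∀ κ : ℝ, 0 ≤ κ → κ ≤ κ₀ →
          (∫⁻ x in Ω, ∫⁻ v : E3, ENNReal.ofReal (‖v‖ ^ κ * f (x, v)))
            ≤ ENNReal.ofReal M) →
        (∫⁻ x in Ω, (ENNReal.ofReal ‖∫ v : E3, f (x, v) • v‖) ^ p) ^ (1 / p)
          ≤ ENNReal.ofReal C :=
  stmt1_general M κ₀ hM p hp1 hp2
end
end

section
/- Let T > 0, a ≥ 0, b ≥ 0, and let y : [0,T] → ℝ be differentiable with y(t) ≥ 0 for all t and y′(t) ≤ a + b√(y(t)) − y(t) for all t ∈ [0,T]. Then for all t ∈ [0,T]: y(t) ≤ max{ y(0), ((b + √(b² + 4a))/2)² }. -/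
/-!
Above the positive root `r` of `z² - b z - a`, i.e. for `y > r²`, the right-hand side
`a + b√y - y = -(√y - r)(√y - r')` is negative (`r' ≤ r` is the other root). So `y` decreases
whenever it lies above `M = max (y 0) r²` and can never cross the barrier `M + ε`; let `ε → 0`.
-/

open Set

theorem image_le_of_deriv_neg_above {y : ℝ → ℝ} {a b M : ℝ}
    (hdiff : ∀ t ∈ Icc a b, DifferentiableAt ℝ y t) (ha : y a ≤ M)
    (hneg : ∀ t ∈ Icc a b, M < y t → deriv y t < 0) :
    ∀ t ∈ Icc a b, y t ≤ M := by
  intro t ht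
  refine le_of_forall_pos_le_add fun ε hε => ?_
  refine image_le_of_deriv_right_lt_deriv_boundary (f' := deriv y) (B := fun _ => M + ε)
    (B' := 0) (fun x hx => (hdiff x hx).continuousAt.continuousWithinAt)
    (fun x hx => (hdiff x (Ico_subset_Icc_self hx)).hasDerivAt.hasDerivWithinAt)
    (by linarith) (fun _ => hasDerivAt_const _ _) (fun x hx hx' => ?_) ht
  exact hneg x (Ico_subset_Icc_self hx) (by linarith)

theorem add_mul_sqrt_sub_neg_of_root_sq_lt {a b u : ℝ} (ha : 0 ≤ a)
    (hu : ((b + √(b ^ 2 + 4 * a)) / 2) ^ 2 < u) :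
    a + b * √u - u < 0 := by
  set s := √(b ^ 2 + 4 * a)
  have hs : s ^ 2 = b ^ 2 + 4 * a := Real.sq_sqrt (by positivity)
  have hbs : |b| ≤ s := Real.abs_le_sqrt (by linarith)
  have hr : (b + s) / 2 < √u :=
    (Real.lt_sqrt (by linarith [neg_abs_le b])).2 hu
  have hu' : √u ^ 2 = u := Real.sq_sqrt ((sq_nonneg _).trans hu.le)
  have hfactor : u - b * √u - a = (√u - (b + s) / 2) * (√u - (b - s) / 2) := by
    linear_combination -hu' + hs / 4
  have : 0 < (√u - (b + s) / 2) * (√u - (b - s) / 2) :=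
    mul_pos (by linarith) (by linarith [Real.sqrt_nonneg (b ^ 2 + 4 * a)])
  linarith

theorem stmt14_general (T a b : ℝ) (ha : 0 ≤ a)
    (y : ℝ → ℝ)
    (hdiff : ∀ t ∈ Set.Icc (0 : ℝ) T, DifferentiableAt ℝ y t)
    (hode : ∀ t ∈ Set.Icc (0 : ℝ) T,
      deriv y t ≤ a + b * Real.sqrt (y t) - y t) :
    ∀ t ∈ Set.Icc (0 : ℝ) T,
      y t ≤ max (y 0) (((b + Real.sqrt (b ^ 2 + 4 * a)) / 2) ^ 2) :=
  image_le_of_deriv_neg_above hdiff (le_max_left _ _) fun t ht hyt =>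
    (hode t ht).trans_lt (add_mul_sqrt_sub_neg_of_root_sq_lt ha ((le_max_right _ _).trans_lt hyt))

/-- ODE comparison principle behind the time-uniform moment
bound: if `y ≥ 0` is differentiable on `[0,T]` and
`y' ≤ a + b√y − y` there, then
`y(t) ≤ max { y(0), ((b + √(b² + 4a))/2)² }` on `[0,T]`. -/
theorem stmt14 (T a b : ℝ) (hT : 0 < T) (ha : 0 ≤ a) (hb : 0 ≤ b)
    (y : ℝ → ℝ)
    (hdiff : ∀ t ∈ Set.Icc (0 : ℝ) T, DifferentiableAt ℝ y t)
    (hpos : ∀ t ∈ Set.Icc (0 : ℝ) T, 0 ≤ y t)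
    (hode : ∀ t ∈ Set.Icc (0 : ℝ) T,
      deriv y t ≤ a + b * Real.sqrt (y t) - y t) :
    ∀ t ∈ Set.Icc (0 : ℝ) T,
      y t ≤ max (y 0) (((b + Real.sqrt (b ^ 2 + 4 * a)) / 2) ^ 2) :=
  stmt14_general T a b ha y hdiff hode
end
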